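/- There is no nontrivial (b,v,a) orthogonal array (with a ≥ 2 and v > k for the induced block size k) whose induced function f: X × S → A additionally satisfies that |{x : f(x,s)=α}| is a constant k independent of s and α. Equivalently, if a mosaic of (v,k,λ) BIBDs is induced by an orthogonal array (so that |{s : f(x,s)=α, f(x',s)=α'}| = λ for all distinct x,x' and all α,α'), then v = k and a = 1. -/

import Mathlib

/-!
Count the triples `(x, y, s)` with `f x s = f y s`. Column by column, constant colour classes
give `|S| · v · k`. Row pair by row pair, a diagonal pair contributes `|S| = a²λ` and each of the
`v(v - 1)` off-diagonal pairs contributes `aλ`. Cancelling `vaλ` and using `v = ak` leaves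
`ak = a + v - 1`, i.e. `a = 1`.
-/

open Finset

theorem Finset.card_eq_card_mul_of_card_fiber_eq {ι A : Type*} [Fintype A] [DecidableEq A]
    (s : Finset ι) (g : ι → A) {k : ℕ} (h : ∀ α, #{x ∈ s | g x = α} = k) :
    #s = Fintype.card A * k := by
  rw [card_eq_sum_card_fiberwise (f := g) (t := univ) fun _ _ ↦ mem_univ _]
  simp [h]

namespace OrthogonalArray

variable {X S A : Type*} [DecidableEq A] {f : X → S → A} {k lam : ℕ}

theorem card_rows_eq [Fintype X] [Fintype A] (s : S) (hk : ∀ α, #{x | f x s = α} = k) :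
    Fintype.card X = Fintype.card A * k :=
  card_eq_card_mul_of_card_fiber_eq univ (f · s) hk

theorem card_columns_eq [Fintype S] [Fintype A]
    (hOA : ∀ x y : X, x ≠ y → ∀ α β : A, #{s | f x s = α ∧ f y s = β} = lam)
    {x y : X} (hxy : x ≠ y) :
    Fintype.card S = Fintype.card A * Fintype.card A * lam := by
  rw [← Fintype.card_prod, ← card_univ]
  refine card_eq_card_mul_of_card_fiber_eq univ (fun s ↦ (f x s, f y s)) fun ⟨α, β⟩ ↦ ?_
  simpa only [Prod.mk.injEq] using hOA x y hxy α β

theorem card_agree_eq [Fintype S] [Fintype A]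
    (hOA : ∀ x y : X, x ≠ y → ∀ α β : A, #{s | f x s = α ∧ f y s = β} = lam)
    {x y : X} (hxy : x ≠ y) :
    #{s | f x s = f y s} = Fintype.card A * lam :=
  card_eq_card_mul_of_card_fiber_eq _ (f x) fun α ↦ by
    rw [filter_filter, ← hOA x y hxy α α]
    exact congrArg card <| filter_congr fun s _ ↦
      ⟨fun ⟨hagree, hα⟩ ↦ ⟨hα, hagree ▸ hα⟩, fun ⟨hx, hy⟩ ↦ ⟨hx.trans hy.symm, hx⟩⟩

theorem sum_card_agree_eq_of_card_fiber_eq [Fintype X] [Fintype S]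
    (hk : ∀ s α, #{x | f x s = α} = k) :
    ∑ x, ∑ y, #{s | f x s = f y s} = Fintype.card S * (Fintype.card X * k) := by
  calc ∑ x, ∑ y, #{s | f x s = f y s}
      = ∑ s : S, ∑ x : X, #{y | f x s = f y s} := by
        simp only [card_filter]
        exact (sum_congr rfl fun _ _ ↦ sum_comm).trans sum_comm
    _ = ∑ s : S, ∑ x : X, k := by
        refine sum_congr rfl fun s _ ↦ sum_congr rfl fun x _ ↦ ?_
        rw [← hk s (f x s)]
        exact congrArg card (filter_congr fun _ _ ↦ eq_comm)
    _ = Fintype.card S * (Fintype.card X * k) := by simp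

theorem sum_card_agree_eq [Fintype X] [DecidableEq X] [Fintype S] [Fintype A]
    (hOA : ∀ x y : X, x ≠ y → ∀ α β : A, #{s | f x s = α ∧ f y s = β} = lam) :
    ∑ x, ∑ y, #{s | f x s = f y s} =
      Fintype.card X * (Fintype.card S + (Fintype.card X - 1) * (Fintype.card A * lam)) := by
  rw [← smul_eq_mul, ← card_univ, ← sum_const]
  refine sum_congr rfl fun x _ ↦ ?_
  rw [← add_sum_erase _ _ (mem_univ x), sum_congr rfl fun y hy ↦
    card_agree_eq hOA (Ne.symm (ne_of_mem_erase hy)), sum_const, card_erase_of_mem (mem_univ x)]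
  simp

end OrthogonalArray

open OrthogonalArray in
/-- There is no nontrivial orthogonal array whose induced function also has constant
color class sizes within each column: if `f` comes from a `(b,v,a)` orthogonal array
(every ordered pair of symbols appears `λ` times in every pair of distinct rows) and
`|{x : f x s = α}| = k` for all `s, α`, then `v = k` and `a = 1`. -/
theorem no_orthogonal_array_with_constant_color_classes
    {X S A : Type*} [Fintype X] [Fintype S] [Fintype A] [DecidableEq A]
    [Nonempty X] [Nonempty S]
    (f : X → S → A) (k lam : ℕ)
    (hOA : ∀ x y : X, x ≠ y → ∀ α β : A,
      (Finset.univ.filter (fun s => f x s = α ∧ f y s = β)).card = lam)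
    (hk : ∀ (s : S) (α : A), (Finset.univ.filter (fun x => f x s = α)).card = k) :
    Fintype.card X = k ∧ Fintype.card A = 1 := by
  classical
  obtain ⟨s₀⟩ := ‹Nonempty S›
  have hX : Fintype.card X = Fintype.card A * k := card_rows_eq s₀ (hk s₀)
  suffices hA : Fintype.card A = 1 by simpa [hA] using hX
  rcases subsingleton_or_nontrivial X with hX₁ | _
  · rw [le_antisymm (Fintype.card_le_one_iff_subsingleton.mpr hX₁) Fintype.card_pos] at hX
    exact Nat.eq_one_of_mul_eq_one_right hX.symm
  · obtain ⟨x, y, hxy⟩ := exists_pair_ne X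
    have hS := card_columns_eq hOA hxy
    have hcount := (sum_card_agree_eq_of_card_fiber_eq hk).symm.trans (sum_card_agree_eq hOA)
    set v := Fintype.card X
    set a := Fintype.card A
    have hv : 0 < v := Fintype.card_pos
    have hpos : 0 < v * a * lam := by
      have hm : 0 < a * a * lam := hS ▸ Fintype.card_pos
      simp only [CanonicallyOrderedAdd.mul_pos] at hm ⊢
      tauto
    have key : a * k = a + (v - 1) :=
      Nat.eq_of_mul_eq_mul_left hpos (by rw [hS] at hcount; linear_combination hcount)
    omega
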